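/- arXiv:2207.06158 — 2 statements merged into one kernel-verified Lean document; each statement's English description precedes it below -/
import Mathlib

section
/- In symbolic model A, for every continuous map ψ^(1) : X^ℕ → X^ℕ, every N ≥ 4 and every a ∈ X^ℕ, the first N−2 components of the RG iterate R_g^{N−1}[ψ^(1)](a) coincide with the first N−2 components of ψ^∞(a). -/
open Filter Topology

namespace SSRG

variable {X : Type*}

/-- Upward shift map `σ₊(a) = (a₂, a₃, …)`. -/
def sigPlus (a : ℕ → X) : ℕ → X := fun i => a (i + 1)

/-- Downward shift map `σ₋(a) = (0, a₁, a₂, …)`. -/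
def sigMinus [Zero X] (a : ℕ → X) : ℕ → X := fun i =>
  match i with
  | 0 => 0
  | j + 1 => a j

/-- Coupling map `ξ(a) = (f(a₁,a₂), g(a₁,a₂), 0, 0, …)`. -/
def xiMap [Zero X] (f g : X → X → X) (a : ℕ → X) : ℕ → X := fun i =>
  match i with
  | 0 => f (a 0) (a 1)
  | 1 => g (a 0) (a 1)
  | _ + 2 => 0

/-- Boundary coupling map `β_b(a) = (g(b,a₁), 0, 0, …)`. -/
def betaMap [Zero X] (g : X → X → X) (b : X) (a : ℕ → X) : ℕ → X := fun i =>
  match i with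
  | 0 => g b (a 0)
  | _ + 1 => 0

/-- The renormalization group operator `R_g[ψ] = σ₋ ∘ ψ ∘ ψ ∘ σ₊ + ξ`. -/
def RGop [AddCommMonoid X] (f g : X → X → X) (ψ : (ℕ → X) → (ℕ → X)) :
    (ℕ → X) → (ℕ → X) :=
  fun a => sigMinus (ψ (ψ (sigPlus a))) + xiMap f g a

/-- The ideal equation at scale `n ≥ 1` and time `t = m·2⁻ⁿ`, `m ≥ 1`.
A field `u : ℕ → ℕ → X` records `u n m = uₙ(m·τₙ)`; row `0` is the boundary row,
`u 0 t = b_t` at integer times `t`. -/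
def IdealEq [AddCommMonoid X] (f g : X → X → X) (u : ℕ → ℕ → X) (n m : ℕ) : Prop :=
  if m % 2 = 1 then
    u n m = f (u n (m - 1)) (u (n + 1) (2 * (m - 1)))
  else
    u n m = f (u n (m - 1)) (u (n + 1) (2 * (m - 1))) +
      g (u (n - 1) ((m - 2) / 2)) (u n (m - 2))

/-- The regularized solution at regularization scale number `N`, with initial
conditions `a` (so `uₙ(0) = aₙ = a (n-1)` for `1 ≤ n ≤ N`) and boundary conditions
`b` (`u₀(t) = b t`): all variables at scales `n > N` vanish and the ideal equations
hold for `1 ≤ n ≤ N`. -/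
def IsRegSol [AddCommMonoid X] (f g : X → X → X) (N : ℕ) (a b : ℕ → X)
    (u : ℕ → ℕ → X) : Prop :=
  (∀ m, u 0 m = b m) ∧
  (∀ n, 1 ≤ n → n ≤ N → u n 0 = a (n - 1)) ∧
  (∀ n, N < n → ∀ m, u n m = 0) ∧
  (∀ n m, 1 ≤ n → n ≤ N → 1 ≤ m → IdealEq f g u n m)

/-- The state `u(1/2) = (u₁(1/2), u₂(1/2), …)` of a field. -/
def halfState (u : ℕ → ℕ → X) : ℕ → X := fun i => u (i + 1) (2 ^ i)

/-- The state `u(1) = (u₁(1), u₂(1), …)` of a field. -/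
def unitState (u : ℕ → ℕ → X) : ℕ → X := fun i => u (i + 1) (2 ^ (i + 1))

/-- The state `u(t) = (u₁(t), u₂(t), …)` of a field at an integer time `t`. -/
def intState (u : ℕ → ℕ → X) (t : ℕ) : ℕ → X := fun i => u (i + 1) (t * 2 ^ (i + 1))

/-- A weak solution of the ideal system: initial conditions `a`, boundary
conditions `b`, and the ideal equations at all points of the lattice. -/
def IsWeakSol [AddCommMonoid X] (f g : X → X → X) (a b : ℕ → X) (u : ℕ → ℕ → X) : Prop :=
  (∀ m, u 0 m = b m) ∧
  (∀ n, 1 ≤ n → u n 0 = a (n - 1)) ∧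
  (∀ n m, 1 ≤ n → 1 ≤ m → IdealEq f g u n m)

/-- Convergence of maps: `ψ N (a_N) → ψ∞ a` for every convergent sequence `a_N → a`
in `X^ℕ` with the product topology. -/
def MapConv [TopologicalSpace X] (ψ : ℕ → (ℕ → X) → (ℕ → X))
    (ψinf : (ℕ → X) → (ℕ → X)) : Prop :=
  ∀ (aN : ℕ → ℕ → X) (a : ℕ → X), Tendsto aN atTop (𝓝 a) →
    Tendsto (fun N => ψ N (aN N)) atTop (𝓝 (ψinf a))

/-- The two-point space `{0,1}` carries the discrete topology. -/
instance : TopologicalSpace (ZMod 2) := ⊥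

instance : DiscreteTopology (ZMod 2) := ⟨rfl⟩

/-- Interaction `f` of the symbolic model A:
`f(0,0) = f(0,1) = f(1,1) = 0`, `f(1,0) = 1`. -/
def fA : ZMod 2 → ZMod 2 → ZMod 2 := fun u v => u * (v + 1)

/-- Interaction `g` of the symbolic model A:
`g(0,0) = 0`, `g(0,1) = g(1,0) = g(1,1) = 1`. -/
def gA : ZMod 2 → ZMod 2 → ZMod 2 := fun u v => u + v + u * v

open scoped Classical

/-- The limiting map `ψ^∞` of the symbolic model A: the first component of
`ψ^∞(a)` is `f(a₁,a₂)`, the second is `g(a₁,a₂)`, and for `n ≥ 3` the `n`-th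
component is `0` if `a₂ = ⋯ = aₙ = 0` and `1` otherwise.  (The `n`-th component
has index `n - 1`, and `aⱼ = a (j-1)`.) -/
noncomputable def psiInfA (a : ℕ → ZMod 2) : ℕ → ZMod 2 := fun i =>
  match i with
  | 0 => fA (a 0) (a 1)
  | 1 => gA (a 0) (a 1)
  | k + 2 => if ∀ j ∈ Finset.Icc 1 (k + 2), a j = 0 then 0 else 1

/-! ### Auxiliary lemmas for Statement 8 -/

lemma RG0 (ψ : (ℕ → ZMod 2) → (ℕ → ZMod 2)) (b : ℕ → ZMod 2) :
    RGop fA gA ψ b 0 = fA (b 0) (b 1) := by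
  simp [RGop, sigMinus, xiMap]

lemma RG1 (ψ : (ℕ → ZMod 2) → (ℕ → ZMod 2)) (b : ℕ → ZMod 2) :
    RGop fA gA ψ b 1 = ψ (ψ (sigPlus b)) 0 + gA (b 0) (b 1) := rfl

lemma RG2 (ψ : (ℕ → ZMod 2) → (ℕ → ZMod 2)) (b : ℕ → ZMod 2) (k : ℕ) :
    RGop fA gA ψ b (k + 2) = ψ (ψ (sigPlus b)) (k + 1) := by
  simp [RGop, sigMinus, xiMap]

lemma ite01 {c d : Prop} {i1 : Decidable c} {i2 : Decidable d} (h : c ↔ d) :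
    @ite (ZMod 2) c i1 0 1 = @ite (ZMod 2) d i2 0 1 := by
  by_cases hc : c
  · rw [if_pos hc, if_pos (h.mp hc)]
  · rw [if_neg hc, if_neg (fun hd => hc (h.mpr hd))]

lemma psiInf_eval2 (a : ℕ → ZMod 2) (k : ℕ) :
    psiInfA a (k + 2) =
      @ite (ZMod 2) (∀ j ∈ Finset.Icc 1 (k + 2), a j = 0) (Classical.propDecidable _) 0 1 := rfl

lemma psiInf_congr (x y : ℕ → ZMod 2) (i : ℕ)
    (h : ∀ j, j ≤ max i 1 → x j = y j) : psiInfA x i = psiInfA y i := by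
  match i with
  | 0 =>
    show fA (x 0) (x 1) = fA (y 0) (y 1)
    rw [h 0 (by omega), h 1 (by omega)]
  | 1 =>
    show gA (x 0) (x 1) = gA (y 0) (y 1)
    rw [h 0 (by omega), h 1 (by omega)]
  | k + 2 =>
    rw [psiInf_eval2, psiInf_eval2]
    refine ite01 ?_
    constructor <;> intro hh j hj <;> have hj' := Finset.mem_Icc.mp hj
    · rw [← h j (by omega)]; exact hh j hj
    · rw [h j (by omega)]; exact hh j hj

lemma icc_two_iff (a : ℕ → ZMod 2) :
    (∀ j ∈ Finset.Icc 1 2, a j = 0) ↔ (a 1 = 0 ∧ a 2 = 0) := by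
  constructor
  · intro h
    exact ⟨h 1 (by simp), h 2 (by simp)⟩
  · rintro ⟨h1, h2⟩ j hj
    obtain ⟨ha, hb⟩ := Finset.mem_Icc.mp hj
    interval_cases j <;> assumption

lemma icc_shift_iff (a : ℕ → ZMod 2) (l : ℕ) :
    (∀ j ∈ Finset.Icc 1 (l + 2), psiInfA (sigPlus a) j = 0) ↔
      (∀ j ∈ Finset.Icc 1 (l + 3), a j = 0) := by
  constructor
  · intro h j hj
    have hj' := Finset.mem_Icc.mp hj
    have h1 : gA (a 1) (a 2) = 0 := h 1 (by simp)
    have ha12 : a 1 = 0 ∧ a 2 = 0 :=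
      (show ∀ u v : ZMod 2, gA u v = 0 → u = 0 ∧ v = 0 by decide) _ _ h1
    have htop := h (l + 2) (by simp [Finset.mem_Icc])
    rw [psiInf_eval2] at htop
    by_cases hP : ∀ j ∈ Finset.Icc 1 (l + 2), sigPlus a j = 0
    · rcases Nat.lt_or_ge j 2 with hlt | hge
      · have : j = 1 := by omega
        rw [this]; exact ha12.1
      · have hm : j - 1 ∈ Finset.Icc 1 (l + 2) := by
          rw [Finset.mem_Icc]; omega
        have h0 : a (j - 1 + 1) = 0 := hP (j - 1) hm
        rwa [show j - 1 + 1 = j by omega] at h0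
    · rw [if_neg hP] at htop
      exact absurd htop (by decide)
  · intro h j hj
    have hj' := Finset.mem_Icc.mp hj
    match j, hj' with
    | 1, _ =>
      show gA (a 1) (a 2) = 0
      rw [h 1 (by rw [Finset.mem_Icc]; omega), h 2 (by rw [Finset.mem_Icc]; omega)]
      decide
    | (m + 2), hj' =>
      rw [psiInf_eval2, if_pos]
      intro j' hj''
      have := Finset.mem_Icc.mp hj''
      exact h (j' + 1) (by rw [Finset.mem_Icc]; omega)

/-- `psiInfA` is a fixed point of the RG operator. -/
lemma psiInf_fixed (a : ℕ → ZMod 2) (i : ℕ) :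
    RGop fA gA psiInfA a i = psiInfA a i := by
  match i with
  | 0 => rw [RG0]; rfl
  | 1 =>
    rw [RG1]
    show fA (fA (a 1) (a 2)) (gA (a 1) (a 2)) + gA (a 0) (a 1) = gA (a 0) (a 1)
    rw [show ∀ u v : ZMod 2, fA (fA u v) (gA u v) = 0 from by decide]
    rw [zero_add]
  | 2 =>
    rw [RG2 _ _ 0]
    show gA (fA (a 1) (a 2)) (gA (a 1) (a 2)) =
      @ite (ZMod 2) (∀ j ∈ Finset.Icc 1 2, a j = 0) (Classical.propDecidable _) 0 1
    rw [show ∀ u v : ZMod 2, gA (fA u v) (gA u v) = if u = 0 ∧ v = 0 then 0 else 1 from by decide]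
    exact ite01 (icc_two_iff a).symm
  | (l + 3) =>
    rw [RG2 _ _ (l + 1)]
    have e1 : psiInfA (psiInfA (sigPlus a)) (l + 2) =
        @ite (ZMod 2) (∀ j ∈ Finset.Icc 1 (l + 2), psiInfA (sigPlus a) j = 0)
          (Classical.propDecidable _) 0 1 := rfl
    have e2 : psiInfA a (l + 3) =
        @ite (ZMod 2) (∀ j ∈ Finset.Icc 1 (l + 3), a j = 0)
          (Classical.propDecidable _) 0 1 := rfl
    rw [e1, e2]
    exact ite01 (icc_shift_iff a l)

/-- One RG step improves an `m`-approximation to an `(m+1)`-approximation, `m ≥ 2`. -/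
lemma RG_step (ψ : (ℕ → ZMod 2) → (ℕ → ZMod 2)) (m : ℕ) (hm : 2 ≤ m)
    (h : ∀ b i, i < m → ψ b i = psiInfA b i) :
    ∀ b i, i < m + 1 → RGop fA gA ψ b i = psiInfA b i := by
  intro b i hi
  match i with
  | 0 => rw [RG0]; rfl
  | (j + 1) =>
    have hj : j < m := by omega
    have e1 : ψ (ψ (sigPlus b)) j = psiInfA (psiInfA (sigPlus b)) j := by
      rw [h _ j hj]
      refine psiInf_congr _ _ j ?_
      intro k hk
      exact h _ k (by omega)
    have e2 : RGop fA gA ψ b (j + 1) = RGop fA gA psiInfA b (j + 1) := by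
      match j with
      | 0 => rw [RG1, RG1, e1]
      | (k + 1) => rw [RG2, RG2, e1]
    rw [e2, psiInf_fixed]

/-- Three RG steps force agreement on the first two components, for any seed map. -/
lemma RG_base (ψ : (ℕ → ZMod 2) → (ℕ → ZMod 2)) :
    ∀ b i, i < 2 → (RGop fA gA)^[3] ψ b i = psiInfA b i := by
  intro b i hi
  have h3 : (RGop fA gA)^[3] ψ = RGop fA gA (RGop fA gA (RGop fA gA ψ)) := by
    rw [show (3 : ℕ) = 2 + 1 from rfl, Function.iterate_succ_apply',
      Function.iterate_succ_apply', Function.iterate_one]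
  rw [h3]
  match i with
  | 0 => rw [RG0]; rfl
  | 1 =>
    have hz0 : RGop fA gA (RGop fA gA ψ) (sigPlus b) 0 = fA (b 1) (b 2) := by
      rw [RG0]; rfl
    have hz1 : RGop fA gA (RGop fA gA ψ) (sigPlus b) 1 =
        fA (fA (b 2) (b 3)) (ψ (ψ (sigPlus (sigPlus (sigPlus b)))) 0 + gA (b 2) (b 3)) +
          gA (b 1) (b 2) := by
      rw [RG1, RG0, RG0, RG1]; rfl
    rw [RG1, RG0, hz0, hz1]
    rw [show ∀ u v x y : ZMod 2, fA (fA u v) (fA (fA v x) y + gA u v) = 0 from by decide]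
    rw [zero_add]
    rfl

lemma RG_iter (k : ℕ) (ψ : (ℕ → ZMod 2) → (ℕ → ZMod 2)) :
    ∀ b i, i < k + 2 → (RGop fA gA)^[k + 3] ψ b i = psiInfA b i := by
  induction k with
  | zero => exact RG_base ψ
  | succ n ih =>
    intro b i hi
    have : (RGop fA gA)^[n + 1 + 3] ψ = RGop fA gA ((RGop fA gA)^[n + 3] ψ) := by
      rw [show n + 1 + 3 = (n + 3) + 1 by omega, Function.iterate_succ_apply']
    rw [this]
    exact RG_step _ (n + 2) (by omega) ih b i (by omega)

/-- In the symbolic model A, for every continuous initial map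
`ψ^{(1)}`, every `N ≥ 4` and every `a ∈ X^ℕ`, the first `N-2` components of the RG
iterate `R_g^{N-1}[ψ^{(1)}](a)` coincide with the first `N-2` components of
`ψ^∞(a)` (components are indexed from `0`, so these are the indices `i < N-2`). -/
theorem statement8 (ψ1 : (ℕ → ZMod 2) → (ℕ → ZMod 2)) (hψ1 : Continuous ψ1)
    (N : ℕ) (hN : 4 ≤ N) (a : ℕ → ZMod 2) :
    ∀ i, i < N - 2 → ((RGop fA gA)^[N - 1] ψ1) a i = psiInfA a i := by
  intro i hi
  have hk : N - 1 = (N - 4) + 3 ∧ N - 2 = (N - 4) + 2 := by omega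
  rw [hk.1]
  exact RG_iter (N - 4) ψ1 a i (by omega)

end SSRG
end

section
/- For every N ≥ 1 the half-time kernels of the stochastically regularized solutions satisfy Ψ^(N+1) = 𝔑_g[Ψ^(N)] = (Σ_− ∘ Ψ^(N) ∘ Ψ^(N) ∘ Σ_+) ∗ Ξ; moreover, for every boundary value b_0 ∈ X and every initial condition a, the law of 𝔲^(N)(1) given a is the kernel Φ^(N)_{b_0} = (Ψ^(N) ∘ Ψ^(N)) ∗ B_{b_0}. -/
/-!
The ideal equations are causal: the value at `(n, m·τₙ)` involves only values at strictly
earlier times. Hence solutions exist (by recursion on time), and up to time `1/2` they depend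
only on the initial conditions at the scales `≤ N` and on the noise `x_m`, `m < 2^N`.
Restarted at time `1/2`, a solution is again a solution, driven by the shifted noise
`x_{m + 2^N}`, except for the boundary coupling `g(b₀, a₁)` at `(1, τ₁)`. So `𝔲(1)` is
`β_{b₀}(a)` plus the result of two half-steps driven by disjoint, hence independent, noise
blocks with the same law, which gives `Φ_{b₀} = (Ψ ∘ Ψ) ∗ B_{b₀}`. Removing the scale `1` from
a solution at scale number `N + 1` leaves a solution at scale number `N` whose boundary row is
the old scale `1`; up to the shift `σ₋` and the term `ξ(a)`, its state at time `1` is the state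
at time `1/2` of the original solution, which gives `Ψ^(N+1) = 𝔑_g[Ψ^(N)]`.
-/

open Filter Topology

namespace SSRG

variable {X : Type*}

open MeasureTheory ProbabilityTheory


/-- A separable metric space is second countable (instance form). -/
instance (priority := 50) {Y : Type*} [MetricSpace Y] [TopologicalSpace.SeparableSpace Y] :
    SecondCountableTopology Y :=
  UniformSpace.secondCountable_of_separable Y

variable {X : Type*}

/-- The stochastically regularized solution at regularization scale number `N`,
with initial conditions `a`, boundary conditions `b` and a realization
`xs = (x₀, x₁, …)` of the noise: the variables at scale `N+1` are frozen to the
noise, `𝔲_{N+1}(m·τ_{N+1}) = x_m`, the variables at scales `n > N+1` vanish, and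
the ideal equations hold for `1 ≤ n ≤ N`. -/
def IsStochRegSol [AddCommMonoid X] (f g : X → X → X) (N : ℕ) (a b : ℕ → X)
    (xs : ℕ → X) (u : ℕ → ℕ → X) : Prop :=
  (∀ m, u 0 m = b m) ∧
  (∀ n, 1 ≤ n → n ≤ N → u n 0 = a (n - 1)) ∧
  (∀ m, u (N + 1) m = xs m) ∧
  (∀ n, N + 1 < n → ∀ m, u n m = 0) ∧
  (∀ n m, 1 ≤ n → n ≤ N → 1 ≤ m → IdealEq f g u n m)

section kernels

variable [MeasurableSpace X]

lemma measurable_sigPlus : Measurable (sigPlus (X := X)) :=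
  measurable_pi_lambda _ fun i => measurable_pi_apply _

lemma measurable_sigMinus [Zero X] : Measurable (sigMinus (X := X)) := by
  refine measurable_pi_lambda _ fun i => ?_
  cases i with
  | zero => exact measurable_const
  | succ j => exact measurable_pi_apply j

lemma measurable_xiMap [Zero X] (f g : X → X → X)
    (hf : Measurable fun p : X × X => f p.1 p.2)
    (hg : Measurable fun p : X × X => g p.1 p.2) :
    Measurable (xiMap f g) := by
  refine measurable_pi_lambda _ fun i => ?_
  match i with
  | 0 =>
    show Measurable fun a : ℕ → X => f (a 0) (a 1)
    have h01 : Measurable fun a : ℕ → X => (a 0, a 1) :=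
      (measurable_pi_apply 0).prodMk (measurable_pi_apply 1)
    exact hf.comp h01
  | 1 =>
    show Measurable fun a : ℕ → X => g (a 0) (a 1)
    have h01 : Measurable fun a : ℕ → X => (a 0, a 1) :=
      (measurable_pi_apply 0).prodMk (measurable_pi_apply 1)
    exact hg.comp h01
  | (k + 2) => exact measurable_const

lemma measurable_betaMap [Zero X] (g : X → X → X)
    (hg : Measurable fun p : X × X => g p.1 p.2) (b : X) :
    Measurable (betaMap g b) := by
  refine measurable_pi_lambda _ fun i => ?_
  match i with
  | 0 =>
    show Measurable fun a : ℕ → X => g b (a 0)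
    have h0 : Measurable fun a : ℕ → X => ((b : X), a 0) :=
      measurable_const.prodMk (measurable_pi_apply 0)
    exact hg.comp h0
  | (k + 1) => exact measurable_const

/-- Convolution of a kernel `κ` on `X^ℕ` with the deterministic kernel of a map
`c : X^ℕ → X^ℕ`:  `(κ ∗ C)(A|a) = κ({u : u + c(a) ∈ A}|a)`, i.e. the law of
`u + c(a)` where `u ∼ κ(·|a)`. -/
noncomputable def convKer [AddCommMonoid X]
    (κ : Kernel (ℕ → X) (ℕ → X)) (c : (ℕ → X) → (ℕ → X)) (hc : Measurable c) :
    Kernel (ℕ → X) (ℕ → X) :=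
  Kernel.map (κ ×ₖ Kernel.deterministic c hc) (fun p => p.1 + p.2)

/-- The stochastic RG operator `𝔑_g[Ψ] = (Σ₋ ∘ Ψ ∘ Ψ ∘ Σ₊) ∗ Ξ` acting on
probability kernels on `X^ℕ`. -/
noncomputable def stochRG [AddCommMonoid X] (f g : X → X → X)
    (hf : Measurable fun p : X × X => f p.1 p.2)
    (hg : Measurable fun p : X × X => g p.1 p.2)
    (Ψ : Kernel (ℕ → X) (ℕ → X)) : Kernel (ℕ → X) (ℕ → X) :=
  convKer
    (Kernel.deterministic sigMinus measurable_sigMinus ∘ₖ Ψ ∘ₖ Ψ ∘ₖ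
      Kernel.deterministic sigPlus measurable_sigPlus)
    (xiMap f g) (measurable_xiMap f g hf hg)

end kernels

section Independence

lemma _root_.ProbabilityTheory.measurable_biSup_comap {Ω ι β : Type*} [MeasurableSpace β]
    {x : ι → Ω → β} {s : Set ι} {i : ι} (hi : i ∈ s) :
    Measurable[⨆ j ∈ s, MeasurableSpace.comap (x j) ‹_›] (x i) :=
  Measurable.of_comap_le
    (le_iSup₂ (f := fun j (_ : j ∈ s) => MeasurableSpace.comap (x j) ‹_›) i hi)

variable {Ω β : Type*} [MeasurableSpace Ω] [MeasurableSpace β] {P : Measure Ω}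

lemma _root_.ProbabilityTheory.IndepFun.map_apply_eq_lintegral {α γ : Type*}
    [MeasurableSpace α] [MeasurableSpace γ] [IsProbabilityMeasure P] {Y : Ω → α} {W : Ω → β}
    (hYW : IndepFun Y W P) (hY : Measurable Y) (hW : Measurable W) {F : α → β → γ}
    (hF : Measurable (Function.uncurry F)) {s : Set γ} (hs : MeasurableSet s) :
    P.map (fun ω => F (Y ω) (W ω)) s = ∫⁻ ω, P.map (fun ω' => F (Y ω) (W ω')) s ∂P := by
  have hpair : P.map (fun ω => (Y ω, W ω)) = (P.map Y).prod (P.map W) :=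
    (indepFun_iff_map_prod_eq_prod_map_map hY.aemeasurable hW.aemeasurable).mp hYW
  rw [show (fun ω => F (Y ω) (W ω)) = Function.uncurry F ∘ fun ω => (Y ω, W ω) from rfl,
    ← Measure.map_map hF (hY.prodMk hW), hpair, Measure.map_apply hF hs,
    Measure.prod_apply (hF hs), lintegral_map (measurable_measure_prodMk_left (hF hs)) hY]
  refine lintegral_congr fun ω => ?_
  rw [Measure.map_apply hW (measurable_prodMk_left (hF hs)),
    Measure.map_apply (show Measurable fun ω' => F (Y ω) (W ω') from
      (hF.comp measurable_prodMk_left).comp hW) hs]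
  rfl

lemma _root_.ProbabilityTheory.iIndepFun.indepFun_of_measurable_biSup {ι γ δ : Type*}
    [MeasurableSpace γ] [MeasurableSpace δ] {x : ι → Ω → β} (hx : iIndepFun x P)
    (hmeas : ∀ i, Measurable (x i)) {S T : Set ι} (hST : Disjoint S T) {Y : Ω → γ} {W : Ω → δ}
    (hY : Measurable[⨆ i ∈ S, MeasurableSpace.comap (x i) ‹_›] Y)
    (hW : Measurable[⨆ i ∈ T, MeasurableSpace.comap (x i) ‹_›] W) :
    IndepFun Y W P := by
  rw [IndepFun_iff_Indep]
  exact indep_of_indep_of_le_right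
    (indep_of_indep_of_le_left
      (indep_iSup_of_disjoint (fun i => (hmeas i).comap_le) hx.iIndep hST) hY.comap_le)
    hW.comap_le

variable {x : ℕ → Ω → β}

lemma _root_.ProbabilityTheory.iIndepFun.indepFun_truncate_shift [Zero β]
    (hx : iIndepFun x P) (hmeas : ∀ i, Measurable (x i)) (S : ℕ) :
    IndepFun (fun ω m => if m < S then x m ω else 0) (fun ω m => x (m + S) ω) P := by
  refine hx.indepFun_of_measurable_biSup hmeas (S := {m | m < S}) (T := {m | S ≤ m})
    (Set.disjoint_left.mpr fun m (h : m < S) (h' : S ≤ m) => absurd h' (not_le.mpr h)) ?_ ?_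
  · let _ : MeasurableSpace Ω := ⨆ i ∈ {m | m < S}, MeasurableSpace.comap (x i) ‹_›
    refine measurable_pi_lambda _ fun m => ?_
    split_ifs with hm
    · exact measurable_biSup_comap hm
    · exact measurable_const
  · let _ : MeasurableSpace Ω := ⨆ i ∈ {m | S ≤ m}, MeasurableSpace.comap (x i) ‹_›
    exact measurable_pi_lambda _ fun m => measurable_biSup_comap (Nat.le_add_left S m)

lemma _root_.ProbabilityTheory.iIndepFun.map_shift_eq {μ : Measure β} (hx : iIndepFun x P)
    (hmeas : ∀ i, Measurable (x i)) (hlaw : ∀ i, P.map (x i) = μ) (S : ℕ) :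
    P.map (fun ω m => x (m + S) ω) = P.map (fun ω m => x m ω) := by
  rw [(hx.precomp (add_left_injective S)).map_fun_eq_infinitePi_map (fun m => hmeas _),
    hx.map_fun_eq_infinitePi_map hmeas]
  simp only [hlaw]

end Independence

/-- The time `m·τₙ` in units of `τ_{N+1}`. -/
def latticeTime (N n m : ℕ) : ℕ := m * 2 ^ (N + 1 - n)

lemma latticeTime_lt_latticeTime {N n m m' : ℕ} (h : m' < m) :
    latticeTime N n m' < latticeTime N n m :=
  Nat.mul_lt_mul_of_pos_right h (by positivity)

lemma latticeTime_finer_lt {N n m : ℕ} (hn : n ≤ N) (hm : 1 ≤ m) :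
    latticeTime N (n + 1) (2 * (m - 1)) < latticeTime N n m := by
  unfold latticeTime
  rw [show N + 1 - n = N + 1 - (n + 1) + 1 by omega, pow_succ]
  calc 2 * (m - 1) * 2 ^ (N + 1 - (n + 1)) = (m - 1) * (2 ^ (N + 1 - (n + 1)) * 2) := by ring
    _ < m * (2 ^ (N + 1 - (n + 1)) * 2) := Nat.mul_lt_mul_of_pos_right (by omega) (by positivity)

lemma latticeTime_coarser_lt {N n m : ℕ} (hn : 1 ≤ n) (hnN : n ≤ N + 1) (hm : 1 ≤ m) :
    latticeTime N (n - 1) ((m - 2) / 2) < latticeTime N n m := by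
  unfold latticeTime
  rw [show N + 1 - (n - 1) = N + 1 - n + 1 by omega, pow_succ]
  calc (m - 2) / 2 * (2 ^ (N + 1 - n) * 2) = (m - 2) / 2 * 2 * 2 ^ (N + 1 - n) := by ring
    _ ≤ (m - 2) * 2 ^ (N + 1 - n) := Nat.mul_le_mul (Nat.div_mul_le_self _ _) le_rfl
    _ < m * 2 ^ (N + 1 - n) := Nat.mul_lt_mul_of_pos_right (by omega) (by positivity)

theorem latticeTime_induction (N : ℕ) {p : ℕ → ℕ → Prop}
    (h : ∀ n m, (∀ n' m', latticeTime N n' m' < latticeTime N n m → p n' m') → p n m)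
    (n m : ℕ) : p n m :=
  (measure fun q : ℕ × ℕ => latticeTime N q.1 q.2).wf.induction (C := fun q => p q.1 q.2)
    (n, m) fun q ih => h q.1 q.2 fun n' m' hlt => ih (n', m') hlt

section Solutions

variable [AddCommMonoid X] {f g : X → X → X} {N : ℕ} {a b xs : ℕ → X} {u : ℕ → ℕ → X}

lemma IsStochRegSol.boundary (hu : IsStochRegSol f g N a b xs u) (m : ℕ) : u 0 m = b m :=
  hu.1 m

lemma IsStochRegSol.init (hu : IsStochRegSol f g N a b xs u) {n : ℕ} (hn : 1 ≤ n)
    (hnN : n ≤ N) : u n 0 = a (n - 1) :=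
  hu.2.1 n hn hnN

lemma IsStochRegSol.noise (hu : IsStochRegSol f g N a b xs u) (m : ℕ) : u (N + 1) m = xs m :=
  hu.2.2.1 m

lemma IsStochRegSol.eq_zero (hu : IsStochRegSol f g N a b xs u) {n : ℕ} (hn : N + 1 < n)
    (m : ℕ) : u n m = 0 :=
  hu.2.2.2.1 n hn m

lemma IsStochRegSol.idealEq (hu : IsStochRegSol f g N a b xs u) {n m : ℕ} (hn : 1 ≤ n)
    (hnN : n ≤ N) (hm : 1 ≤ m) : IdealEq f g u n m :=
  hu.2.2.2.2 n m hn hnN hm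

variable (f g N) in
def regSol (a xs : ℕ → X) (n m : ℕ) : X :=
  if n = 0 ∨ N + 1 < n then 0
  else if n = N + 1 then xs m
  else if m = 0 then a (n - 1)
  else if m % 2 = 1 then f (regSol a xs n (m - 1)) (regSol a xs (n + 1) (2 * (m - 1)))
  else f (regSol a xs n (m - 1)) (regSol a xs (n + 1) (2 * (m - 1))) +
    g (regSol a xs (n - 1) ((m - 2) / 2)) (regSol a xs n (m - 2))
termination_by latticeTime N n m
decreasing_by
  all_goals first
    | exact latticeTime_lt_latticeTime (by omega)
    | exact latticeTime_finer_lt (by omega) (by omega)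
    | exact latticeTime_coarser_lt (by omega) (by omega) (by omega)

variable (a xs) in
lemma isStochRegSol_regSol :
    IsStochRegSol f g N a 0 xs (regSol f g N a xs) := by
  refine ⟨fun m => ?_, fun n hn hnN => ?_, fun m => ?_, fun n hn m => ?_,
    fun n m hn hnN hm => ?_⟩
  · rw [regSol]; simp
  · rw [regSol]; simp [show n ≠ 0 by omega, show ¬ N + 1 < n by omega, show n ≠ N + 1 by omega]
  · rw [regSol]; simp
  · rw [regSol]; simp [hn]
  · unfold IdealEq
    rw [regSol]
    simp only [show n ≠ 0 by omega, show ¬ N + 1 < n by omega, show n ≠ N + 1 by omega,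
      show m ≠ 0 by omega, false_or, if_false]
    split_ifs <;> rfl

lemma measurable_regSol [MeasurableSpace X] [MeasurableAdd₂ X]
    (hf : Measurable fun p : X × X => f p.1 p.2) (hg : Measurable fun p : X × X => g p.1 p.2)
    (n m : ℕ) : Measurable fun p : (ℕ → X) × (ℕ → X) => regSol f g N p.1 p.2 n m := by
  induction n, m using latticeTime_induction N with
  | h n m ih =>
    simp_rw [regSol.eq_1 (n := n) (m := m)]
    split_ifs with h0 h1 h2 h3
    · exact measurable_const
    · exact (measurable_pi_apply m).comp measurable_snd
    · exact (measurable_pi_apply (n - 1)).comp measurable_fst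
    · exact hf.comp ((ih _ _ (latticeTime_lt_latticeTime (by omega))).prodMk
        (ih _ _ (latticeTime_finer_lt (by omega) (by omega))))
    · exact (hf.comp ((ih _ _ (latticeTime_lt_latticeTime (by omega))).prodMk
        (ih _ _ (latticeTime_finer_lt (by omega) (by omega))))).add
        (hg.comp ((ih _ _ (latticeTime_coarser_lt (by omega) (by omega) (by omega))).prodMk
          (ih _ _ (latticeTime_lt_latticeTime (by omega)))))

variable (f g N) in
/-- `m ≤ 2 ^ (n - 1)` is `m·τₙ ≤ 1/2`. -/
def SolvesUntilHalf (u : ℕ → ℕ → X) : Prop :=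
  ∀ n m, 1 ≤ n → n ≤ N → 1 ≤ m → m ≤ 2 ^ (n - 1) → IdealEq f g u n m

lemma IsStochRegSol.solvesUntilHalf (hu : IsStochRegSol f g N a b xs u) :
    SolvesUntilHalf f g N u :=
  fun _ _ hn hnN hm _ => hu.idealEq hn hnN hm

lemma two_pow_eq_two_mul_two_pow_pred {n : ℕ} (hn : 1 ≤ n) : 2 ^ n = 2 * 2 ^ (n - 1) := by
  rw [← pow_succ', Nat.sub_add_cancel hn]

theorem eq_of_solvesUntilHalf {u' : ℕ → ℕ → X} (hu : SolvesUntilHalf f g N u)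
    (hu' : SolvesUntilHalf f g N u')
    (hinit : ∀ n, 1 ≤ n → n ≤ N → u n 0 = u' n 0)
    (htop : ∀ m < 2 ^ N, u (N + 1) m = u' (N + 1) m) :
    ∀ n m, 1 ≤ n → n ≤ N → m ≤ 2 ^ (n - 1) → u n m = u' n m := by
  intro n m
  induction n, m using latticeTime_induction N with
  | h n m ih =>
    intro hn hnN hm
    rcases Nat.eq_zero_or_pos m with rfl | hm1
    · exact hinit n hn hnN
    have hpow := two_pow_eq_two_mul_two_pow_pred hn
    have earlier : ∀ m' < m, u n m' = u' n m' := fun m' h =>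
      ih n m' (latticeTime_lt_latticeTime h) hn hnN (by omega)
    have finer : u (n + 1) (2 * (m - 1)) = u' (n + 1) (2 * (m - 1)) := by
      rcases hnN.lt_or_eq with hlt | rfl
      · exact ih _ _ (latticeTime_finer_lt hnN hm1) (by omega) hlt
          (by rw [Nat.add_sub_cancel]; omega)
      · exact htop _ (by omega)
    have e := hu n m hn hnN hm1 hm
    have e' := hu' n m hn hnN hm1 hm
    unfold IdealEq at e e'
    split_ifs at e e' with hodd
    · rw [e, e', earlier _ (by omega), finer]
    · have hn2 : 2 ≤ n := by
        by_contra h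
        obtain rfl : n = 1 := by omega
        rw [Nat.sub_self, pow_zero] at hm
        omega
      have hpow' := two_pow_eq_two_mul_two_pow_pred (n := n - 1) (by omega)
      have coarser : u (n - 1) ((m - 2) / 2) = u' (n - 1) ((m - 2) / 2) :=
        ih _ _ (latticeTime_coarser_lt hn (by omega) hm1) (by omega) (by omega) (by omega)
      rw [e, e', earlier _ (by omega), earlier _ (by omega), finer, coarser]

theorem halfState_eq_of_solvesUntilHalf {u' : ℕ → ℕ → X} (hu : SolvesUntilHalf f g N u)
    (hu' : SolvesUntilHalf f g N u') (hinit : ∀ n, 1 ≤ n → n ≤ N → u n 0 = u' n 0)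
    (htop : ∀ m ≤ 2 ^ N, u (N + 1) m = u' (N + 1) m)
    (hzero : ∀ n, N + 1 < n → u n (2 ^ (n - 1)) = u' n (2 ^ (n - 1))) :
    halfState u = halfState u' := by
  funext i
  rcases lt_trichotomy i N with hi | rfl | hi
  · exact eq_of_solvesUntilHalf hu hu' hinit (fun m hm => htop m hm.le) (i + 1) (2 ^ i)
      (by omega) hi le_rfl
  · exact htop _ le_rfl
  · exact hzero (i + 1) (by omega)

lemma IsStochRegSol.halfState_eq {a' b' : ℕ → X} {u' : ℕ → ℕ → X}
    (hu : IsStochRegSol f g N a b xs u) (hu' : IsStochRegSol f g N a' b' xs u')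
    (ha : ∀ i < N, a i = a' i) : halfState u = halfState u' :=
  halfState_eq_of_solvesUntilHalf hu.solvesUntilHalf hu'.solvesUntilHalf
    (fun n hn hnN => by rw [hu.init hn hnN, hu'.init hn hnN, ha _ (by omega)])
    (fun m _ => by rw [hu.noise, hu'.noise])
    (fun n hn => by rw [hu.eq_zero hn, hu'.eq_zero hn])

variable (f) in
/-- The field `u` restarted at time `1/2`. At `(1, τ₁)` the boundary coupling is dropped:
`u₁(1) = f(u₁(1/2), u₂(1/2)) + g(b₀, a₁)` becomes `f(u₁(1/2), u₂(1/2))`. -/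
def restart (u : ℕ → ℕ → X) (n m : ℕ) : X :=
  if n = 1 ∧ m = 1 then f (u 1 1) (u 2 2) else u n (m + 2 ^ (n - 1))

lemma solvesUntilHalf_restart (hu : ∀ n m, 1 ≤ n → n ≤ N → 1 ≤ m → IdealEq f g u n m) :
    SolvesUntilHalf f g N (restart f u) := by
  intro n m hn hnN hm hmn
  rcases hn.eq_or_lt with rfl | hn2
  · obtain rfl : m = 1 := by rw [Nat.sub_self, pow_zero] at hmn; omega
    simp [IdealEq, restart]
  obtain ⟨k, rfl⟩ : ∃ k, n = k + 2 := ⟨n - 2, by omega⟩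
  have e := hu (k + 2) (m + 2 ^ (k + 1)) hn hnN (le_add_right hm)
  have h1 : (2 : ℕ) ^ (k + 1) = 2 * 2 ^ k := pow_succ' 2 k
  have h2 : (2 : ℕ) ^ (k + 2) = 4 * 2 ^ k := by rw [pow_succ', h1]; ring
  rw [show k + 2 - 1 = k + 1 by omega] at hmn
  have hcoarse : ¬ (k + 1 = 1 ∧ (m - 2) / 2 = 1) := by
    rintro ⟨hk, h⟩
    obtain rfl : k = 0 := by omega
    rw [zero_add, pow_one] at hmn
    omega
  simp only [IdealEq, restart, show k + 2 + 1 - 1 = k + 2 by omega,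
    show k + 2 - 1 = k + 1 by omega, show k + 1 - 1 = k by omega, show k + 2 ≠ 1 by omega,
    show k + 2 + 1 ≠ 1 by omega, false_and, hcoarse, if_false] at e ⊢
  rw [h1] at e hmn ⊢
  rw [h2]
  rw [show (m + 2 * 2 ^ k) % 2 = m % 2 by omega,
    show m + 2 * 2 ^ k - 1 = m - 1 + 2 * 2 ^ k by omega,
    show 2 * (m - 1 + 2 * 2 ^ k) = 2 * (m - 1) + 4 * 2 ^ k by omega] at e
  split_ifs at e ⊢ with hodd
  · exact e
  · rwa [show (m + 2 * 2 ^ k - 2) / 2 = (m - 2) / 2 + 2 ^ k by omega,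
      show m + 2 * 2 ^ k - 2 = m - 2 + 2 * 2 ^ k by omega] at e

lemma unitState_eq_halfState_restart (hN : 1 ≤ N)
    (hu : IsStochRegSol f g N a b xs u) :
    unitState u = halfState (restart f u) + betaMap g (b 0) a := by
  funext i
  rcases i with _ | j
  · have e := hu.idealEq le_rfl hN (m := 2) (by omega)
    simp only [IdealEq, if_neg (show ¬ 2 % 2 = 1 by omega)] at e
    simp [unitState, halfState, restart, betaMap, e, hu.boundary, hu.init le_rfl hN]
  · simp [unitState, halfState, restart, betaMap, ← two_mul, ← pow_succ']

lemma IsStochRegSol.unitState_eq {b' : ℕ → X} {w : ℕ → ℕ → X} (hN : 1 ≤ N)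
    (hu : IsStochRegSol f g N a b xs u)
    (hw : IsStochRegSol f g N (halfState u) b' (fun m => xs (m + 2 ^ N)) w) :
    unitState u = halfState w + betaMap g (b 0) a := by
  rw [unitState_eq_halfState_restart hN hu]
  congr 1
  refine halfState_eq_of_solvesUntilHalf (solvesUntilHalf_restart fun _ _ => hu.idealEq)
    hw.solvesUntilHalf (fun n hn hnN => ?_) (fun m _ => ?_) (fun n hn => ?_)
  · rw [hw.init hn hnN, restart, if_neg (by omega), halfState, Nat.sub_add_cancel hn, zero_add]
  · rw [hw.noise, restart, if_neg (by omega), hu.noise, Nat.add_sub_cancel]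
  · rw [hw.eq_zero hn, restart, if_neg (by omega), hu.eq_zero hn]

variable (f g N) in
def halfStep (z xs : ℕ → X) : ℕ → X := halfState (regSol f g N z xs)

lemma halfStep_congr_left {z z' : ℕ → X} (h : ∀ i < N, z i = z' i) (xs : ℕ → X) :
    halfStep f g N z xs = halfStep f g N z' xs :=
  (isStochRegSol_regSol z xs).halfState_eq (isStochRegSol_regSol z' xs) h

lemma halfStep_congr_right (z : ℕ → X) {xs xs' : ℕ → X} (h : ∀ m < 2 ^ N, xs m = xs' m) :
    ∀ i < N, halfStep f g N z xs i = halfStep f g N z xs' i := fun i hi =>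
  eq_of_solvesUntilHalf (isStochRegSol_regSol z xs).solvesUntilHalf
    (isStochRegSol_regSol z xs').solvesUntilHalf
    (fun n hn hnN => by
      rw [(isStochRegSol_regSol z xs).init hn hnN, (isStochRegSol_regSol z xs').init hn hnN])
    (fun m hm => by
      rw [(isStochRegSol_regSol z xs).noise, (isStochRegSol_regSol z xs').noise, h m hm])
    (i + 1) (2 ^ i) (by omega) hi le_rfl

lemma IsStochRegSol.halfState_eq_halfStep (hu : IsStochRegSol f g N a b xs u) :
    halfState u = halfStep f g N a xs :=
  hu.halfState_eq (isStochRegSol_regSol a xs) fun _ _ => rfl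

variable (f g N) in
def unitStep (z xs : ℕ → X) : ℕ → X :=
  halfStep f g N (halfStep f g N z xs) (fun m => xs (m + 2 ^ N))

lemma IsStochRegSol.unitState_eq_unitStep (hN : 1 ≤ N) (hu : IsStochRegSol f g N a b xs u) :
    unitState u = unitStep f g N a xs + betaMap g (b 0) a := by
  rw [hu.unitState_eq hN (isStochRegSol_regSol _ _), hu.halfState_eq_halfStep]
  rfl

lemma IsStochRegSol.dropScale (hu : IsStochRegSol f g (N + 1) a b xs u) :
    IsStochRegSol f g N (sigPlus a) (u 1) xs (fun n m => u (n + 1) m) := by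
  obtain ⟨-, hinit, hnoise, hzero, heq⟩ := hu
  refine ⟨fun m => rfl, fun n hn hnN => ?_, hnoise, fun n hn => hzero (n + 1) (by omega),
    fun n m hn hnN hm => ?_⟩
  · dsimp only
    rw [hinit (n + 1) (by omega) (by omega), sigPlus, Nat.sub_add_cancel hn, Nat.add_sub_cancel]
  · have h := heq (n + 1) m (by omega) (by omega) hm
    simp only [IdealEq, Nat.add_sub_cancel] at h ⊢
    rwa [Nat.sub_add_cancel hn]

lemma IsStochRegSol.halfState_succ (hN : 1 ≤ N) (hu : IsStochRegSol f g (N + 1) a b xs u) :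
    halfState u = sigMinus (unitStep f g N (sigPlus a) xs) + xiMap f g a := by
  have hunit := hu.dropScale.unitState_eq_unitStep hN
  have ha : u 1 0 = a 0 := hu.init le_rfl (by omega)
  funext i
  rcases i with _ | _ | j
  · have e := hu.idealEq le_rfl (by omega) (m := 1) le_rfl
    simp only [IdealEq, Nat.mod_succ, if_true, tsub_self, mul_zero] at e
    simp [halfState, sigMinus, xiMap, e, ha, hu.init (n := 2) (by omega) (by omega)]
  · simpa [halfState, unitState, sigMinus, xiMap, betaMap, ha, sigPlus] using congrFun hunit 0
  · simpa [halfState, unitState, sigMinus, xiMap, betaMap] using congrFun hunit (j + 1)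

end Solutions

section Laws

variable [AddCommMonoid X] [MeasurableSpace X] [MeasurableAdd₂ X]

lemma convKer_apply (κ : Kernel (ℕ → X) (ℕ → X)) [IsSFiniteKernel κ]
    (c : (ℕ → X) → (ℕ → X)) (hc : Measurable c) (a : ℕ → X) :
    convKer κ c hc a = (κ a).map (· + c a) := by
  have hadd : Measurable fun p : (ℕ → X) × (ℕ → X) => p.1 + p.2 := measurable_add
  rw [convKer, Kernel.map_apply _ hadd, Kernel.prod_apply, Kernel.deterministic_apply,
    Measure.prod_dirac, Measure.map_map hadd measurable_prodMk_right]
  rfl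

lemma stochRG_apply {f g : X → X → X} (hf : Measurable fun p : X × X => f p.1 p.2)
    (hg : Measurable fun p : X × X => g p.1 p.2) (Ψ : Kernel (ℕ → X) (ℕ → X))
    [IsSFiniteKernel Ψ] (a : ℕ → X) :
    stochRG f g hf hg Ψ a = ((Ψ ∘ₖ Ψ) (sigPlus a)).map (fun v => sigMinus v + xiMap f g a) := by
  rw [stochRG, convKer_apply, Kernel.comp_deterministic_eq_comap, Kernel.comap_apply,
    Kernel.comp_assoc, Kernel.deterministic_comp_eq_map, Kernel.map_apply _ measurable_sigMinus,
    Measure.map_map (measurable_add_const _) measurable_sigMinus]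
  rfl

variable {f g : X → X → X} {N : ℕ}

lemma measurable_halfStep (hf : Measurable fun p : X × X => f p.1 p.2)
    (hg : Measurable fun p : X × X => g p.1 p.2) :
    Measurable (Function.uncurry (halfStep f g N)) :=
  measurable_pi_lambda _ fun i => measurable_regSol hf hg (i + 1) (2 ^ i)

variable {Ω : Type*} [MeasurableSpace Ω] {P : Measure Ω}
  {x : ℕ → Ω → X} {κ : Kernel (ℕ → X) (ℕ → X)}

lemma eq_map_halfStep_of_forall_isStochRegSol (hf : Measurable fun p : X × X => f p.1 p.2)
    (hg : Measurable fun p : X × X => g p.1 p.2) (hx : ∀ m, Measurable (x m))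
    (hκ : ∀ (a b : ℕ → X) (V : Ω → ℕ → ℕ → X), Measurable V →
      (∀ ω, IsStochRegSol f g N a b (fun m => x m ω) (V ω)) →
      κ a = P.map (fun ω => halfState (V ω)))
    (z : ℕ → X) : κ z = P.map (fun ω => halfStep f g N z (fun m => x m ω)) :=
  hκ z 0 _ (measurable_pi_lambda _ fun n => measurable_pi_lambda _ fun m =>
    (measurable_regSol hf hg n m).comp (measurable_const.prodMk (measurable_pi_lambda _ hx)))
    fun _ => isStochRegSol_regSol z _

lemma isMarkovKernel_of_eq_map_halfStep [IsProbabilityMeasure P]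
    (hf : Measurable fun p : X × X => f p.1 p.2) (hg : Measurable fun p : X × X => g p.1 p.2)
    (hx : ∀ m, Measurable (x m))
    (hκ : ∀ z, κ z = P.map (fun ω => halfStep f g N z (fun m => x m ω))) :
    IsMarkovKernel κ :=
  ⟨fun z => by
    rw [hκ z]
    exact Measure.isProbabilityMeasure_map
      ((measurable_halfStep hf hg).of_uncurry_left.comp (measurable_pi_lambda _ hx)).aemeasurable⟩

lemma measurable_unitStep (hf : Measurable fun p : X × X => f p.1 p.2)
    (hg : Measurable fun p : X × X => g p.1 p.2) (a : ℕ → X) :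
    Measurable (unitStep f g N a) :=
  (measurable_halfStep hf hg).comp
    (((measurable_halfStep hf hg).of_uncurry_left).prodMk
      (measurable_pi_lambda _ fun m => measurable_pi_apply (m + 2 ^ N)))

/-- The two half-steps of `unitStep` use the disjoint, hence independent, noise blocks
`(x_m)_{m < 2^N}` and `(x_m)_{m ≥ 2^N}`, and the second block has the law of the whole
noise. -/
theorem comp_apply_eq_map_unitStep [IsProbabilityMeasure P]
    (hf : Measurable fun p : X × X => f p.1 p.2) (hg : Measurable fun p : X × X => g p.1 p.2)
    (hx : ∀ m, Measurable (x m)) {μ : Measure X} (hlaw : ∀ m, P.map (x m) = μ)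
    (hindep : iIndepFun x P)
    (hκ : ∀ z, κ z = P.map (fun ω => halfStep f g N z (fun m => x m ω))) (a : ℕ → X) :
    (κ ∘ₖ κ) a = P.map (fun ω => unitStep f g N a (fun m => x m ω)) := by
  set H := halfStep f g N
  have hH : Measurable (Function.uncurry H) := measurable_halfStep hf hg
  have hX : Measurable fun ω m => x m ω := measurable_pi_lambda _ hx
  have hW : Measurable fun ω m => x (m + 2 ^ N) ω := measurable_pi_lambda _ fun m => hx _
  have hY : Measurable fun ω m => if m < 2 ^ N then x m ω else 0 :=
    measurable_pi_lambda _ fun m => by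
      split_ifs
      · exact hx m
      · exact measurable_const
  have hHY : ∀ ω, H (H a fun m => if m < 2 ^ N then x m ω else 0) = H (H a fun m => x m ω) :=
    fun ω => funext (halfStep_congr_left (halfStep_congr_right a fun m hm => if_pos hm))
  have hκW : ∀ z, κ z = P.map (fun ω => H z fun m => x (m + 2 ^ N) ω) := fun z =>
    calc κ z = (P.map fun ω m => x m ω).map (H z) := (hκ z).trans
          (Measure.map_map hH.of_uncurry_left hX).symm
      _ = (P.map fun ω m => x (m + 2 ^ N) ω).map (H z) := by rw [hindep.map_shift_eq hx hlaw]
      _ = P.map (fun ω => H z fun m => x (m + 2 ^ N) ω) := Measure.map_map hH.of_uncurry_left hW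
  ext s hs
  calc (κ ∘ₖ κ) a s = ∫⁻ ω, κ (H a fun m => x m ω) s ∂P := by
        rw [Kernel.comp_apply' _ _ _ hs, hκ a]
        exact lintegral_map (κ.measurable_coe hs) (hH.of_uncurry_left.comp hX)
    _ = ∫⁻ ω, P.map (fun ω' => H (H a fun m => if m < 2 ^ N then x m ω else 0)
          fun m => x (m + 2 ^ N) ω') s ∂P := by
        simp_rw [hκW, hHY]
    _ = P.map (fun ω => H (H a fun m => if m < 2 ^ N then x m ω else 0)
          fun m => x (m + 2 ^ N) ω) s :=
        ((hindep.indepFun_truncate_shift hx (2 ^ N)).map_apply_eq_lintegral hY hW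
          (F := fun y w => H (H a y) w)
          (hH.comp ((hH.of_uncurry_left.comp measurable_fst).prodMk measurable_snd)) hs).symm
    _ = P.map (fun ω => unitStep f g N a fun m => x m ω) s := by
        simp_rw [hHY]
        rfl

end Laws

theorem statement9_general {X : Type*} [MetricSpace X]
    [TopologicalSpace.SeparableSpace X] [MeasurableSpace X] [BorelSpace X]
    [AddCommMonoid X] [ContinuousAdd X]
    (f g : X → X → X) (hf : Continuous fun p : X × X => f p.1 p.2)
    (hg : Continuous fun p : X × X => g p.1 p.2)
    {Ω : Type*} [MeasurableSpace Ω] (P : Measure Ω) [IsProbabilityMeasure P]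
    (μx : Measure X)
    (x : ℕ → Ω → X) (hxmeas : ∀ m, Measurable (x m))
    (hxlaw : ∀ m, Measure.map (x m) P = μx)
    (hxindep : iIndepFun x P)
    (Ψ : ℕ → Kernel (ℕ → X) (ℕ → X))
    (hΨ : ∀ N, 1 ≤ N → ∀ (a' b' : ℕ → X) (V : Ω → ℕ → ℕ → X), Measurable V →
      (∀ ω, IsStochRegSol f g N a' b' (fun m => x m ω) (V ω)) →
      Ψ N a' = Measure.map (fun ω => halfState (V ω)) P) :
    (∀ N, 1 ≤ N → Ψ (N + 1) = stochRG f g hf.measurable hg.measurable (Ψ N)) ∧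
    (∀ N, 1 ≤ N → ∀ (a b : ℕ → X) (U : Ω → ℕ → ℕ → X), Measurable U →
      (∀ ω, IsStochRegSol f g N a b (fun m => x m ω) (U ω)) →
      Measure.map (fun ω => unitState (U ω)) P =
        convKer (Ψ N ∘ₖ Ψ N) (betaMap g (b 0))
          (measurable_betaMap g hg.measurable (b 0)) a) := by
  have hX : Measurable fun ω m => x m ω := measurable_pi_lambda _ hxmeas
  have hΨ_eq N (hN : 1 ≤ N) := eq_map_halfStep_of_forall_isStochRegSol hf.measurable
    hg.measurable hxmeas (hΨ N hN)
  have hΨΨ N (hN : 1 ≤ N) := comp_apply_eq_map_unitStep hf.measurable hg.measurable hxmeas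
    hxlaw hxindep (hΨ_eq N hN)
  have hMarkov N (hN : 1 ≤ N) := isMarkovKernel_of_eq_map_halfStep hf.measurable
    hg.measurable hxmeas (hΨ_eq N hN)
  have hunit N a : Measurable fun ω => unitStep f g N a fun m => x m ω :=
    (measurable_unitStep hf.measurable hg.measurable a).comp hX
  refine ⟨fun N hN => Kernel.ext fun a => ?_, fun N hN a b U _ hU => ?_⟩
  · have := hMarkov N hN
    rw [hΨ_eq (N + 1) (by omega), stochRG_apply, hΨΨ N hN,
      Measure.map_map (g := fun v => sigMinus v + xiMap f g a)
        ((measurable_add_const _).comp measurable_sigMinus) (hunit N _)]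
    congr 1
    funext ω
    exact (isStochRegSol_regSol a _).halfState_succ hN
  · have := hMarkov N hN
    rw [convKer_apply, hΨΨ N hN, Measure.map_map (measurable_add_const _) (hunit N a)]
    congr 1
    funext ω
    exact (hU ω).unitState_eq_unitStep hN

/-- For every `N ≥ 1` the half-time kernels `Ψ^{(N)}` of the
stochastically regularized solutions (pinned down, via `hΨ` and `hex`, as the laws
of `𝔲^{(N)}(1/2)` given the initial condition) satisfy
`Ψ^{(N+1)} = 𝔑_g[Ψ^{(N)}] = (Σ₋ ∘ Ψ^{(N)} ∘ Ψ^{(N)} ∘ Σ₊) ∗ Ξ`; moreover, for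
every boundary value `b₀ = b 0` and initial condition `a`, the law of `𝔲^{(N)}(1)`
given `a` is the kernel `Φ^{(N)}_{b₀} = (Ψ^{(N)} ∘ Ψ^{(N)}) ∗ B_{b₀}` evaluated
at `a`. -/
theorem statement9 {X : Type*} [MetricSpace X] [CompleteSpace X]
    [TopologicalSpace.SeparableSpace X] [MeasurableSpace X] [BorelSpace X]
    [AddCommMonoid X] [ContinuousAdd X]
    (f g : X → X → X) (hf : Continuous fun p : X × X => f p.1 p.2)
    (hg : Continuous fun p : X × X => g p.1 p.2)
    {Ω : Type*} [MeasurableSpace Ω] (P : Measure Ω) [IsProbabilityMeasure P]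
    (μx : Measure X) [IsProbabilityMeasure μx]
    (x : ℕ → Ω → X) (hxmeas : ∀ m, Measurable (x m))
    (hxlaw : ∀ m, Measure.map (x m) P = μx)
    (hxindep : iIndepFun x P)
    (Ψ : ℕ → Kernel (ℕ → X) (ℕ → X))
    (hΨ : ∀ N, 1 ≤ N → ∀ (a' b' : ℕ → X) (V : Ω → ℕ → ℕ → X), Measurable V →
      (∀ ω, IsStochRegSol f g N a' b' (fun m => x m ω) (V ω)) →
      Ψ N a' = Measure.map (fun ω => halfState (V ω)) P)
    (hex : ∀ N, 1 ≤ N → ∀ a' b' : ℕ → X, ∃ V : Ω → ℕ → ℕ → X,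
      Measurable V ∧ ∀ ω, IsStochRegSol f g N a' b' (fun m => x m ω) (V ω)) :
    (∀ N, 1 ≤ N → Ψ (N + 1) = stochRG f g hf.measurable hg.measurable (Ψ N)) ∧
    (∀ N, 1 ≤ N → ∀ (a b : ℕ → X) (U : Ω → ℕ → ℕ → X), Measurable U →
      (∀ ω, IsStochRegSol f g N a b (fun m => x m ω) (U ω)) →
      Measure.map (fun ω => unitState (U ω)) P =
        convKer (Ψ N ∘ₖ Ψ N) (betaMap g (b 0))
          (measurable_betaMap g hg.measurable (b 0)) a) :=
  statement9_general f g hf hg P μx x hxmeas hxlaw hxindep Ψ hΨ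

end SSRG
end
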